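/- For any rational vectors t, v, w in ℚ^n with v ≠ 0 and any ε > 0, there exist positive rational numbers δ, τ with δ < ε and τ < ε such that den(t + δ·v) = den(t + δ·v + τ·w), where den(x) of a rational vector x denotes the least common multiple of the denominators of its coordinates. -/

import Mathlib

/-!
Pick a large prime `p`, a coordinate `i` with `v i ≠ 0`, and put `δ = (v i).den / p ^ 2`,
`τ = vecDen w / p`. Every coordinate of `τ • w` has denominator dividing `p`, whereas the `i`-th
coordinates of `t + δ • v` and of `t + δ • v + τ • w` both have a pole of order two at `p`, so `p`
divides both denominators. Adding a vector whose denominator divides both denominators leaves the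
denominator unchanged.
-/

/-- Denominator of a rational vector: lcm of coordinate denominators. -/
def vecDen {n : ℕ} (v : Fin n → ℚ) : ℕ :=
  Finset.univ.lcm (fun i => (v i).den)

namespace Rat

theorem den_natCast_mul_dvd (n : ℕ) (x : ℚ) : ((n : ℚ) * x).den ∣ x.den := by
  simpa using mul_den_dvd (n : ℚ) x

theorem exists_natCast_mul_eq_intCast {x : ℚ} {n : ℕ} (h : x.den ∣ n) :
    ∃ k : ℤ, (n : ℚ) * x = k := by
  obtain ⟨c, rfl⟩ := h
  refine ⟨c * x.num, ?_⟩
  push_cast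
  rw [← x.den_mul_eq_num]
  ring

theorem den_intCast_div_natCast_dvd (k : ℤ) (n : ℕ) : ((k : ℚ) / n).den ∣ n := by
  have h := den_dvd k n
  rw [divInt_eq_div] at h
  exact_mod_cast h

variable {p : ℕ}

theorem den_intCast_div_prime (hp : p.Prime) {z : ℤ} (hz : ¬ (p : ℤ) ∣ z) :
    ((z : ℚ) / p).den = p := by
  refine (hp.eq_one_or_self_of_dvd _ (den_intCast_div_natCast_dvd z p)).resolve_left ?_
  rw [← Int.cast_natCast, den_div_intCast_eq_one_iff _ _ (by exact_mod_cast hp.ne_zero)]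
  exact hz

theorem prime_dvd_den_add (hp : p.Prime) {r s : ℚ} (hr : ¬ p ∣ r.den) (hs : p ∣ s.den) :
    p ∣ (r + s).den := by
  by_contra h
  have hsub : (r + s - r).den ∣ (r + s).den * r.den := sub_den_dvd _ _
  rw [add_sub_cancel_left] at hsub
  exact (hp.dvd_mul.mp (hs.trans hsub)).elim h hr

-- Multiplied by `p`, the number becomes `z / p`, of denominator `p`, plus a `p`-integral one.
theorem prime_dvd_den_add_div_sq_add_div (hp : p.Prime) {a : ℚ} (ha : ¬ p ∣ a.den) {z : ℤ}
    (hz : ¬ (p : ℤ) ∣ z) (k : ℤ) : p ∣ (a + z / p ^ 2 + k / p).den := by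
  have hpa : ¬ p ∣ (p * a + k).den := by
    rw [add_intCast_den]
    exact fun h => ha (h.trans (den_natCast_mul_dvd p a))
  have hmul : p * (a + z / p ^ 2 + k / p) = p * a + k + z / p := by
    have : (p : ℚ) ≠ 0 := by exact_mod_cast hp.ne_zero
    field_simp
    ring
  refine dvd_trans ?_ (den_natCast_mul_dvd p _)
  rw [hmul]
  exact prime_dvd_den_add hp hpa (den_intCast_div_prime hp hz).symm.dvd

end Rat

theorem exists_prime_gt_and_div_lt (N : ℕ) (C : ℚ) {ε : ℚ} (hε : 0 < ε) :
    ∃ p : ℕ, p.Prime ∧ N < p ∧ C / p < ε :=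
  ((Nat.frequently_atTop_iff_infinite.mpr Nat.infinite_setOfPred_prime).and_eventually
    ((Filter.eventually_gt_atTop N).and
      ((tendsto_const_div_atTop_nhds_zero_nat C).eventually (gt_mem_nhds hε)))).exists

section vecDen

variable {n : ℕ}

theorem vecDen_dvd_iff {x : Fin n → ℚ} {N : ℕ} : vecDen x ∣ N ↔ ∀ i, (x i).den ∣ N := by
  simp [vecDen]

theorem den_dvd_vecDen (x : Fin n → ℚ) (i : Fin n) : (x i).den ∣ vecDen x :=
  vecDen_dvd_iff.mp dvd_rfl i

theorem vecDen_pos (x : Fin n → ℚ) : 0 < vecDen x :=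
  Nat.pos_of_ne_zero (by simp [vecDen, Finset.lcm_eq_zero_iff])

@[simp]
theorem vecDen_neg (x : Fin n → ℚ) : vecDen (-x) = vecDen x :=
  eq_of_forall_dvd fun _ => by simp [vecDen_dvd_iff]

theorem vecDen_add_dvd_lcm (x y : Fin n → ℚ) : vecDen (x + y) ∣ (vecDen x).lcm (vecDen y) :=
  vecDen_dvd_iff.mpr fun i => (Rat.add_den_dvd_lcm _ _).trans
    (Nat.lcm_dvd ((den_dvd_vecDen x i).trans (Nat.dvd_lcm_left _ _))
      ((den_dvd_vecDen y i).trans (Nat.dvd_lcm_right _ _)))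

theorem vecDen_add_eq_of_dvd {x y : Fin n → ℚ} (hx : vecDen y ∣ vecDen x)
    (hxy : vecDen y ∣ vecDen (x + y)) : vecDen (x + y) = vecDen x := by
  apply Nat.dvd_antisymm
  · simpa [Nat.lcm_eq_left hx] using vecDen_add_dvd_lcm x y
  · simpa [Nat.lcm_eq_left hxy] using vecDen_add_dvd_lcm (x + y) (-y)

theorem vecDen_smul_div_dvd (x : Fin n → ℚ) (m : ℕ) :
    vecDen (((vecDen x : ℚ) / m) • x) ∣ m := by
  refine vecDen_dvd_iff.mpr fun i => ?_
  obtain ⟨k, hk⟩ := Rat.exists_natCast_mul_eq_intCast (den_dvd_vecDen x i)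
  rw [Pi.smul_apply, smul_eq_mul, div_mul_eq_mul_div, hk]
  exact Rat.den_intCast_div_natCast_dvd k m

end vecDen

theorem stmt_0 {n : ℕ} (t v w : Fin n → ℚ) (hv : v ≠ 0) (ε : ℚ) (hε : 0 < ε) :
    ∃ δ τ : ℚ, 0 < δ ∧ δ < ε ∧ 0 < τ ∧ τ < ε ∧
      vecDen (t + δ • v) = vecDen (t + δ • v + τ • w) := by
  obtain ⟨i, hi⟩ : ∃ i, v i ≠ 0 := Function.ne_iff.mp hv
  obtain ⟨p, hp, hpN, hpC⟩ := exists_prime_gt_and_div_lt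
    (max (t i).den (v i).num.natAbs) (max (v i).den (vecDen w) : ℕ) hε
  have hp0 : (0 : ℚ) < p := by exact_mod_cast hp.pos
  have hpt : ¬ p ∣ (t i).den :=
    Nat.not_dvd_of_pos_of_lt (t i).pos ((le_max_left _ _).trans_lt hpN)
  have hpv : ¬ (p : ℤ) ∣ (v i).num := Int.natCast_dvd.not.mpr <|
    Nat.not_dvd_of_pos_of_lt (Int.natAbs_pos.mpr (Rat.num_ne_zero.mpr hi))
      ((le_max_right _ _).trans_lt hpN)
  set δ : ℚ := (v i).den / p ^ 2 with hδ_def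
  set τ : ℚ := vecDen w / p with hτ_def
  have hδ : δ ≤ (max (v i).den (vecDen w) : ℕ) / p := calc
    δ ≤ (v i).den / p := div_le_div_of_nonneg_left (Nat.cast_nonneg _) hp0
      (le_self_pow₀ (by exact_mod_cast hp.one_le) two_ne_zero)
    _ ≤ _ := div_le_div_of_nonneg_right (by exact_mod_cast le_max_left _ _) hp0.le
  have hτ : τ ≤ (max (v i).den (vecDen w) : ℕ) / p :=
    div_le_div_of_nonneg_right (by exact_mod_cast le_max_right _ _) hp0.le
  have hδv : δ * v i = (v i).num / p ^ 2 := by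
    rw [hδ_def, ← (v i).den_mul_eq_num]
    ring
  obtain ⟨k, hk⟩ := Rat.exists_natCast_mul_eq_intCast (den_dvd_vecDen w i)
  have hτw : τ * w i = k / p := by rw [hτ_def, ← hk]; ring
  refine ⟨δ, τ, div_pos (Nat.cast_pos.mpr (v i).pos) (by positivity), hδ.trans_lt hpC,
    div_pos (Nat.cast_pos.mpr (vecDen_pos w)) hp0, hτ.trans_lt hpC,
    (vecDen_add_eq_of_dvd ?_ ?_).symm⟩
  all_goals refine (vecDen_smul_div_dvd w p).trans (dvd_trans ?_ (den_dvd_vecDen _ i))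
  · simpa [hδv] using Rat.prime_dvd_den_add_div_sq_add_div hp hpt hpv 0
  · simpa [hδv, hτw] using Rat.prime_dvd_den_add_div_sq_add_div hp hpt hpv k
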